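/- Let ι be a finite nonempty type, let d_e ≥ 1 be an integer, let h_x, h_p > 0 and λ ≥ 0 be reals, and let E : {−d_e,…,d_e} × ι → ℝ satisfy |E(k,i)| ≤ λ for all k and i. Let D^el be the diagonal matrix on ℂ^ι with entries D^el_{i,i} = (1/h_x)·Σ_{k=−d_e}^{d_e} c_{d_e,k}·E(k,i). Let g_p be a positive integer and let D¹ be the first-order central difference operator with periodic boundary conditions on ℂ^{ℤ/g_pℤ} with grid spacing h_p. Then ‖D^el ⊗ D¹‖ ≤ λ · 2·(ln d_e + 1)/(h_x·h_p). -/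

import Mathlib

open scoped Matrix.Norms.L2Operator Kronecker

/-- The central finite-difference coefficients `c_{d,k}` of order `2d`:
`c_{d,k} = (-1)^(k+1) · (d!)² / (k·(d-k)!·(d+k)!)` for `k ≠ 0`, and `c_{d,0} = 0`. -/
noncomputable def centralFDCoeff (d : ℕ) (k : ℤ) : ℝ :=
  if k = 0 then 0
  else (-1 : ℝ) ^ (k + 1) * ((d.factorial : ℝ)) ^ 2 /
    ((k : ℝ) * (((d : ℤ) - k).toNat.factorial : ℝ) * (((d : ℤ) + k).toNat.factorial : ℝ))

/-- The first-order central difference operator with periodic boundary conditions on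
`ℂ^{ℤ/gℤ}` with grid spacing `h`:  `D¹ = (1/(2h))·Σ_p (E_{p-1,p} − E_{p,p-1})`. -/
noncomputable def centralDiff1 (g : ℕ) [NeZero g] (h : ℝ) : Matrix (ZMod g) (ZMod g) ℂ :=
  ((1 / (2 * h) : ℝ) : ℂ) •
    ∑ p : ZMod g,
      (Matrix.single (p - 1) p (1 : ℂ) - Matrix.single p (p - 1) (1 : ℂ))

/-! The stencil is controlled by `(d!)² ≤ (d-k)!·(d+k)!`, a restatement of the central binomial
coefficient being the largest, which gives `|c_{d,k}| ≤ 1/|k|` and hence an ℓ¹-norm of the stencil of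
at most `2·H_d ≤ 2(ln d + 1)`; every diagonal entry of `D^el` is therefore at most
`λ·2(ln d + 1)/h_x`. The periodic difference operator is `(P − P⁻¹)/(2h)` for the cyclic shift
permutation matrix `P`, so its norm is at most `1/h`. Finally `diag a ⊗ B = (1 ⊗ B)·(diag a ⊗ 1)`,
where `‖1 ⊗ B‖ ≤ ‖B‖` and `diag a ⊗ 1` is diagonal with the same entries as `diag a`. -/

open Finset
open scoped Nat

theorem Nat.factorial_mul_factorial_le_of_add_eq {a b d : ℕ} (h : a + b = d + d) :
    d ! * d ! ≤ a ! * b ! := by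
  have hchoose : (a + b).choose b ≤ (d + d).choose d := by
    simpa [h, ← two_mul] using Nat.choose_le_middle b (a + b)
  refine Nat.le_of_mul_le_mul_left ?_ (Nat.choose_pos (Nat.le_add_left d d))
  calc (d + d).choose d * (d ! * d !) = (a + b).choose b * (a ! * b !) := by
        rw [← mul_assoc, ← mul_assoc, Nat.add_choose_mul_factorial_mul_factorial,
          Nat.add_choose_mul_factorial_mul_factorial, h]
    _ ≤ (d + d).choose d * (a ! * b !) := Nat.mul_le_mul_right _ hchoose

theorem Finset.sum_Icc_neg_natCast_eq_add_sum_range {M : Type*} [AddCommMonoid M] (f : ℤ → M)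
    (n : ℕ) : ∑ k ∈ Icc (-(n : ℤ)) n, f k = f 0 + ∑ i ∈ range n, (f (i + 1) + f (-(i + 1))) := by
  induction n with
  | zero => simp
  | succ n ih =>
    have hIcc : Icc (-((n + 1 : ℕ) : ℤ)) (n + 1 : ℕ) =
        insert (-(n + 1 : ℤ)) (insert (n + 1 : ℤ) (Icc (-(n : ℤ)) n)) := by
      ext k; simp only [mem_Icc, mem_insert]; omega
    rw [hIcc, sum_insert (by simp; omega), sum_insert (by simp), ih, sum_range_succ]
    abel

theorem sum_Icc_abs_inv_eq_two_mul_harmonic (n : ℕ) :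
    ∑ k ∈ Icc (-(n : ℤ)) n, |(k : ℝ)|⁻¹ = 2 * harmonic n := by
  rw [Finset.sum_Icc_neg_natCast_eq_add_sum_range, harmonic, Rat.cast_sum, mul_sum]
  push_cast
  simp only [abs_neg, abs_zero, inv_zero, zero_add]
  refine sum_congr rfl fun i _ => ?_
  rw [abs_of_pos (by positivity)]
  ring

-- For `k = 0` both sides vanish, thanks to `0⁻¹ = 0`.
theorem abs_centralFDCoeff_le {d : ℕ} {k : ℤ} (hk : |k| ≤ d) :
    |centralFDCoeff d k| ≤ |(k : ℝ)|⁻¹ := by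
  rcases eq_or_ne k 0 with rfl | hk0
  · simp [centralFDCoeff]
  obtain ⟨hk_lower, hk_upper⟩ := abs_le.mp hk
  have hfact : (d ! : ℝ) ^ 2 ≤ ((d - k : ℤ).toNat ! : ℝ) * ((d + k : ℤ).toNat ! : ℝ) := by
    rw [sq]
    exact_mod_cast Nat.factorial_mul_factorial_le_of_add_eq (by omega)
  have hk_pos : 0 < |(k : ℝ)| := by positivity
  rw [centralFDCoeff, if_neg hk0, abs_div, abs_mul, abs_neg_one_zpow, one_mul, abs_mul, abs_mul,
    abs_of_nonneg (by positivity : (0 : ℝ) ≤ (d ! : ℝ) ^ 2), Nat.abs_cast, Nat.abs_cast,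
    div_le_iff₀ (by positivity)]
  calc (d ! : ℝ) ^ 2 ≤ ((d - k : ℤ).toNat ! : ℝ) * ((d + k : ℤ).toNat ! : ℝ) := hfact
    _ = _ := by field_simp

theorem sum_abs_centralFDCoeff_le (d : ℕ) :
    ∑ k ∈ Icc (-(d : ℤ)) d, |centralFDCoeff d k| ≤ 2 * (Real.log d + 1) := by
  calc ∑ k ∈ Icc (-(d : ℤ)) d, |centralFDCoeff d k| ≤ ∑ k ∈ Icc (-(d : ℤ)) d, |(k : ℝ)|⁻¹ :=
        sum_le_sum fun k hk => abs_centralFDCoeff_le (abs_le.mpr (mem_Icc.mp hk))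
    _ = 2 * harmonic d := sum_Icc_abs_inv_eq_two_mul_harmonic d
    _ ≤ 2 * (Real.log d + 1) := by linarith [harmonic_le_one_add_log d]

theorem abs_sum_centralFDCoeff_mul_le {d : ℕ} {e : ℤ → ℝ} {C : ℝ}
    (he : ∀ k ∈ Icc (-(d : ℤ)) d, |e k| ≤ C) :
    |∑ k ∈ Icc (-(d : ℤ)) d, centralFDCoeff d k * e k| ≤ C * (2 * (Real.log d + 1)) := by
  have hC : 0 ≤ C := (abs_nonneg _).trans (he 0 (by simp))
  calc |∑ k ∈ Icc (-(d : ℤ)) d, centralFDCoeff d k * e k|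
      ≤ ∑ k ∈ Icc (-(d : ℤ)) d, |centralFDCoeff d k| * C := by
        refine (abs_sum_le_sum_abs _ _).trans (sum_le_sum fun k hk => ?_)
        rw [abs_mul]
        exact mul_le_mul_of_nonneg_left (he k hk) (abs_nonneg _)
    _ ≤ 2 * (Real.log d + 1) * C := by
        rw [← sum_mul]; exact mul_le_mul_of_nonneg_right (sum_abs_centralFDCoeff_le d) hC
    _ = C * (2 * (Real.log d + 1)) := mul_comm _ _

open Matrix

namespace Matrix

section Shift

variable {G R : Type*} [AddGroup G] [Fintype G] [DecidableEq G] [NonAssocSemiring R]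

theorem sum_single_sub_one_eq_permMatrix_addRight (a : G) :
    ∑ p : G, single (p - a) p (1 : R) = Equiv.Perm.permMatrix R (Equiv.addRight a) := by
  ext i j
  rw [sum_apply, sum_eq_single (i + a)]
  · simp [single_apply, eq_comm]
  · intro b _ hb
    simp [sub_eq_iff_eq_add, hb]
  · simp

theorem sum_single_one_sub_eq_permMatrix_subRight (a : G) :
    ∑ p : G, single p (p - a) (1 : R) = Equiv.Perm.permMatrix R (Equiv.subRight a) := by
  ext i j
  rw [sum_apply, sum_eq_single i]
  · simp [single_apply, eq_comm]
  · intro b _ hb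
    simp [hb]
  · simp

end Shift

theorem one_kronecker_mulVec_apply {α l m n : Type*} [NonAssocSemiring α] [Fintype l]
    [DecidableEq l] [Fintype n] (B : Matrix m n α) (x : l × n → α) (i : l) (p : m) :
    ((1 : Matrix l l α) ⊗ₖ B *ᵥ x) (i, p) = (B *ᵥ fun q => x (i, q)) p := by
  simp [mulVec, dotProduct, Fintype.sum_prod_type, one_apply, ite_mul, sum_ite_eq]

section L2OpNorm

variable {𝕜 : Type*} [RCLike 𝕜] {l m n : Type*} [Fintype l] [DecidableEq l] [Fintype m]
  [Fintype n] [DecidableEq n]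

theorem l2_opNorm_one_kronecker_le (B : Matrix m n 𝕜) :
    ‖(1 : Matrix l l 𝕜) ⊗ₖ B‖ ≤ ‖B‖ := by
  rw [l2_opNorm_def]
  refine ContinuousLinearMap.opNorm_le_bound _ (norm_nonneg _) fun x => ?_
  refine (sq_le_sq₀ (by positivity) (by positivity)).mp ?_
  let slice (i : l) : EuclideanSpace 𝕜 n := WithLp.toLp 2 fun q => x (i, q)
  have hx : ‖x‖ ^ 2 = ∑ i, ‖slice i‖ ^ 2 := by
    simp [slice, EuclideanSpace.norm_sq_eq, Fintype.sum_prod_type]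
  calc _ = ∑ i, ‖(EuclideanSpace.equiv m 𝕜).symm (B *ᵥ slice i)‖ ^ 2 := by
        simp [slice, EuclideanSpace.norm_sq_eq, Fintype.sum_prod_type, one_kronecker_mulVec_apply]
    _ ≤ ∑ i, (‖B‖ * ‖slice i‖) ^ 2 := by
        gcongr with i
        exact l2_opNorm_mulVec B (slice i)
    _ = (‖B‖ * ‖x‖) ^ 2 := by
        simp only [mul_pow, hx, mul_sum]

theorem l2_opNorm_diagonal_kronecker_le (a : l → 𝕜) (B : Matrix m n 𝕜) :
    ‖diagonal a ⊗ₖ B‖ ≤ ‖a‖ * ‖B‖ := by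
  have hfactor : diagonal a ⊗ₖ B = (1 : Matrix l l 𝕜) ⊗ₖ B * diagonal a ⊗ₖ (1 : Matrix n n 𝕜) := by
    rw [← mul_kronecker_mul, Matrix.one_mul, Matrix.mul_one]
  have hdiag : diagonal a ⊗ₖ (1 : Matrix n n 𝕜) = diagonal fun p => a p.1 := by
    rw [← diagonal_one, diagonal_kronecker_diagonal]; simp
  have hdiag_norm : ‖fun p : l × n => a p.1‖ ≤ ‖a‖ :=
    (pi_norm_le_iff_of_nonneg (norm_nonneg a)).mpr fun p => norm_le_pi_norm a p.1
  calc ‖diagonal a ⊗ₖ B‖ ≤ ‖(1 : Matrix l l 𝕜) ⊗ₖ B‖ * ‖diagonal a ⊗ₖ (1 : Matrix n n 𝕜)‖ := by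
        rw [hfactor]; exact l2_opNorm_mul _ _
    _ ≤ ‖B‖ * ‖a‖ := by
        rw [hdiag, l2_opNorm_diagonal]
        exact mul_le_mul (l2_opNorm_one_kronecker_le B) hdiag_norm (norm_nonneg _) (norm_nonneg _)
    _ = ‖a‖ * ‖B‖ := mul_comm _ _

end L2OpNorm

end Matrix

theorem centralDiff1_eq_smul_sub_permMatrix (g : ℕ) [NeZero g] (h : ℝ) :
    centralDiff1 g h = ((1 / (2 * h) : ℝ) : ℂ) •
      (Equiv.Perm.permMatrix ℂ (Equiv.addRight 1) - Equiv.Perm.permMatrix ℂ (Equiv.subRight 1)) := by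
  rw [centralDiff1, sum_sub_distrib, sum_single_sub_one_eq_permMatrix_addRight,
    sum_single_one_sub_eq_permMatrix_subRight]

theorem norm_centralDiff1_le (g : ℕ) [NeZero g] {h : ℝ} (hh : 0 < h) :
    ‖centralDiff1 g h‖ ≤ 1 / h := by
  rw [centralDiff1_eq_smul_sub_permMatrix, norm_smul, Complex.norm_real,
    Real.norm_of_nonneg (by positivity)]
  calc 1 / (2 * h) * ‖_ - _‖ ≤ 1 / (2 * h) * (1 + 1) := by
        gcongr
        exact (norm_sub_le _ _).trans
          (add_le_add (permMatrix_l2_opNorm_le _) (permMatrix_l2_opNorm_le _))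
    _ = 1 / h := by field_simp; ring

theorem electronic_liouvillian_norm_le_general (ι : Type*) [Fintype ι] [DecidableEq ι]
    (de : ℕ) (hx hp lam : ℝ) (hhx : 0 < hx) (hhp : 0 < hp) (hlam : 0 ≤ lam)
    (E : ℤ → ι → ℝ) (hE : ∀ k ∈ Finset.Icc (-(de : ℤ)) (de : ℤ), ∀ i, |E k i| ≤ lam)
    (gp : ℕ) [NeZero gp] :
    ‖Matrix.diagonal (fun i : ι =>
          (((1 / hx) * ∑ k ∈ Finset.Icc (-(de : ℤ)) (de : ℤ), centralFDCoeff de k * E k i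
            : ℝ) : ℂ))
        ⊗ₖ centralDiff1 gp hp‖ ≤
      lam * (2 * (Real.log de + 1) / (hx * hp)) := by
  set c := 1 / hx * (lam * (2 * (Real.log de + 1)))
  have hc : 0 ≤ c := by have := Real.log_natCast_nonneg de; positivity
  have hentries : ‖fun i : ι => (((1 / hx) * ∑ k ∈ Icc (-(de : ℤ)) de,
      centralFDCoeff de k * E k i : ℝ) : ℂ)‖ ≤ c := by
    refine (pi_norm_le_iff_of_nonneg hc).mpr fun i => ?_
    rw [Complex.norm_real, Real.norm_eq_abs, abs_mul, abs_of_pos (one_div_pos.mpr hhx)]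
    exact mul_le_mul_of_nonneg_left (abs_sum_centralFDCoeff_mul_le fun k hk => hE k hk i)
      (one_div_pos.mpr hhx).le
  calc _ ≤ c * ‖centralDiff1 gp hp‖ := (l2_opNorm_diagonal_kronecker_le _ _).trans
        (mul_le_mul_of_nonneg_right hentries (norm_nonneg _))
    _ ≤ c * (1 / hp) := mul_le_mul_of_nonneg_left (norm_centralDiff1_le gp hhp) hc
    _ = lam * (2 * (Real.log de + 1) / (hx * hp)) := by simp only [c]; field_simp

/-- **Spectral norm bound on the electronic Liouvillian term** `V^{el}_{n,j} = D^{el} ⊗ D¹`,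
with `D^{el}` the diagonal finite-difference matrix of electronic energies bounded by `λ`:
`‖D^{el} ⊗ D¹‖ ≤ λ·2·(ln d_e + 1)/(h_x·h_p)`. -/
theorem electronic_liouvillian_norm_le (ι : Type*) [Fintype ι] [Nonempty ι] [DecidableEq ι]
    (de : ℕ) (hde : 1 ≤ de) (hx hp lam : ℝ) (hhx : 0 < hx) (hhp : 0 < hp) (hlam : 0 ≤ lam)
    (E : ℤ → ι → ℝ) (hE : ∀ k ∈ Finset.Icc (-(de : ℤ)) (de : ℤ), ∀ i, |E k i| ≤ lam)
    (gp : ℕ) [NeZero gp] :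
    ‖Matrix.diagonal (fun i : ι =>
          (((1 / hx) * ∑ k ∈ Finset.Icc (-(de : ℤ)) (de : ℤ), centralFDCoeff de k * E k i
            : ℝ) : ℂ))
        ⊗ₖ centralDiff1 gp hp‖ ≤
      lam * (2 * (Real.log de + 1) / (hx * hp)) :=
  electronic_liouvillian_norm_le_general ι de hx hp lam hhx hhp hlam E hE gp
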